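/- Let K be a field, ℓ, m positive integers, x ∈ K, and Q = Σ_{j ≤ ℓ} Q_j(X) Y^j a polynomial in K[X, Y] with deg_Y(Q) ≤ ℓ. Define the Y-reversal Q̄ = Y^ℓ Q(X, Y^{-1}) = Σ_{j ≤ ℓ} Q_{ℓ-j}(X) Y^j. Then Q̄(x, 0) = 0 with multiplicity at least m if and only if (X - x)^{m - j} divides Q_{ℓ - j} for each j < m. -/

import Mathlib

/-- The `Y`-reversal `Q̄ = Y^ℓ Q(X, Y^{-1}) = Σ_{j ≤ ℓ} Q_{ℓ-j}(X) Y^j` of a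
polynomial `Q ∈ K[X][Y]` with `deg_Y Q ≤ ℓ`. -/
noncomputable def yReversal {K : Type*} [Field K] (ℓ : ℕ)
    (Q : Polynomial (Polynomial K)) : Polynomial (Polynomial K) :=
  ∑ j ∈ Finset.range (ℓ + 1), Polynomial.C (Q.coeff (ℓ - j)) * Polynomial.X ^ j

open Polynomial

theorem yReversal_coeff {K : Type*} [Field K] {ℓ j : ℕ} (Q : K[X][X]) (hj : j ≤ ℓ) :
    (yReversal ℓ Q).coeff j = Q.coeff (ℓ - j) := by
  simp only [yReversal, finsetSum_coeff, coeff_C_mul_X_pow]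
  rw [Finset.sum_ite_eq, if_pos (Finset.mem_range.2 (Nat.lt_succ_of_le hj))]

theorem X_sub_C_pow_dvd_iff_taylor_coeff_eq_zero {R : Type*} [CommRing R] {n : ℕ} {x : R}
    {p : R[X]} : (X - C x) ^ n ∣ p ↔ ∀ h < n, (taylor x p).coeff h = 0 := by
  rw [X_sub_C_pow_dvd_iff, X_pow_dvd_iff, taylor_apply]

theorem vanishing_at_infinity_iff_general {K : Type*} [Field K] (ℓ m : ℕ)
    (hmℓ : m ≤ ℓ) (x : K)
    (Q : Polynomial (Polynomial K)) :
    (∀ j h : ℕ, h + j < m →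
        Polynomial.coeff (Polynomial.taylor x ((yReversal ℓ Q).coeff j)) h = 0) ↔
      ∀ j < m, (Polynomial.X - Polynomial.C x) ^ (m - j) ∣ Q.coeff (ℓ - j) := by
  simp only [X_sub_C_pow_dvd_iff_taylor_coeff_eq_zero]
  constructor
  · intro hvanish j hj h hh
    rw [← yReversal_coeff Q (by omega)]
    exact hvanish j h (by omega)
  · intro hdvd j h hjh
    rw [yReversal_coeff Q (by omega)]
    exact hdvd j (by omega) h (by omega)

/-- For `Q = Σ_{j ≤ ℓ} Q_j(X) Y^j` with `deg_Y Q ≤ ℓ`, the reversal `Q̄`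
satisfies `Q̄(x, 0) = 0` with multiplicity at least `m` (i.e. `Q̄(X+x,Y)` has no
monomial of total degree less than `m`) iff `(X - x)^{m-j}` divides `Q_{ℓ-j}`
for each `j < m`. -/
theorem vanishing_at_infinity_iff {K : Type*} [Field K] (ℓ m : ℕ)
    (hℓ : 0 < ℓ) (hm : 0 < m) (hmℓ : m ≤ ℓ) (x : K)
    (Q : Polynomial (Polynomial K)) (hQ : Q.natDegree ≤ ℓ) :
    (∀ j h : ℕ, h + j < m →
        Polynomial.coeff (Polynomial.taylor x ((yReversal ℓ Q).coeff j)) h = 0) ↔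
      ∀ j < m, (Polynomial.X - Polynomial.C x) ^ (m - j) ∣ Q.coeff (ℓ - j) :=
  vanishing_at_infinity_iff_general ℓ m hmℓ x Q
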